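/- arXiv:2104.04411 — 2 statements merged into one kernel-verified Lean document; each statement's English description precedes it below -/
import Mathlib

section
/- For every integer n ≥ 1, the identity ∑_{λ ⊢ n} (−1)^{l(λ)} z_λ(t)^{−1} = t^n − t^{n−1} holds in ℚ(t); equivalently, ∑_{λ ⊢ n} (−1)^{l(λ)} (∏_{j=1}^{l(λ)} (1 − t^{λ_j}))/z_λ = t^n − t^{n−1}, where the sum is over all partitions λ of n. -/
open scoped BigOperators

namespace Green

noncomputable section

/-- The base field `F = ℚ(t)`, the field of rational functions in `t`. -/
abbrev FF : Type := RatFunc ℚ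

/-- The indeterminate `t ∈ ℚ(t)`. -/
def tF : FF := RatFunc.X

/-- The ring of symmetric functions over `F`, identified with the polynomial ring
`F[p₁, p₂, …]` on the power sums, variables indexed by positive integers. -/
abbrev SymF : Type := MvPolynomial ℕ+ FF

/-- The power sum `p_n` for `n ≥ 1` (junk value `1` if `n = 0`). -/
def pS (n : ℕ) : SymF := if h : 0 < n then MvPolynomial.X (⟨n, h⟩ : ℕ+) else 1

/-- `p_λ = p_{λ₁} ⋯ p_{λ_l}` for a partition given as a multiset of parts. -/
def pMs (m : Multiset ℕ) : SymF := (m.map pS).prod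

/-- `z_λ = ∏_i i^{m_i} · m_i!` where `m_i` is the multiplicity of `i` in `λ`. -/
def zMs (m : Multiset ℕ) : ℕ :=
  m.toFinset.prod fun i => i ^ m.count i * (m.count i).factorial

/-- `z_λ(t) = z_λ / ∏_j (1 - t^{λ_j})`. -/
def ztMs (m : Multiset ℕ) : FF := (zMs m : FF) / (m.map fun i => 1 - tF ^ i).prod

/-- `q_k`: equal to `0` for `k < 0`, `1` for `k = 0`, and `∑_{ν ⊢ k} z_ν(t)⁻¹ p_ν` for `k ≥ 1`. -/
def qq (k : ℤ) : SymF :=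
  if k < 0 then 0
  else ∑ ν : Nat.Partition k.toNat, (ztMs ν.parts)⁻¹ • pMs ν.parts

/-- Coefficients of `(1 - R)(∑_{k≥0} t^k R^k) = 1 + ∑_{k≥1} (t^k - t^{k-1}) R^k`. -/
def cRO : ℕ → FF
  | 0 => 1
  | k + 1 => tF ^ (k + 1) - tF ^ k

/-- Index pairs `i < j` for the raising operators `R_{ij}`. -/
abbrev PairsLT (l : ℕ) : Type := {pr : Fin l × Fin l // pr.1 < pr.2}

/-- The result of applying `∏_{i<j} R_{ij}^{k_{ij}}` to the integer tuple `α`,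
where `R_{ij}` translates the index by `e_i - e_j`. -/
def raised {l : ℕ} (α : Fin l → ℤ) (k : PairsLT l → ℕ) : Fin l → ℤ := fun r =>
  α r + ∑ pr : PairsLT l, (k pr : ℤ) *
    ((if pr.val.1 = r then 1 else 0) - (if pr.val.2 = r then 1 else 0))

/-- `q_β = q_{β₁} ⋯ q_{β_l}` for an integer tuple `β`. -/
def qTup {l : ℕ} (β : Fin l → ℤ) : SymF := ∏ i, qq (β i)

/-- The Hall–Littlewood function
`Q_α(t) = ∏_{1≤i<j≤l} (1 - R_{ij})(∑_{k≥0} t^k R_{ij}^k) q_α`,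
the (finitely supported) expansion of the product of raising-operator series. -/
def QTup {l : ℕ} (α : Fin l → ℤ) : SymF :=
  finsum fun k : PairsLT l → ℕ => (∏ pr, cRO (k pr)) • qTup (raised α k)

/-- `Q_α(t)` for an integer list `α`. -/
def QL (α : List ℤ) : SymF := QTup fun i : Fin α.length => α.get i

/-- The weakly decreasing sort of a multiset of naturals. -/
def sortDesc (m : Multiset ℕ) : List ℕ := (m.sort (· ≤ ·)).reverse

/-- `Q_λ(t)` for a partition given as a multiset of parts. -/
def QMs (m : Multiset ℕ) : SymF := QL ((sortDesc m).map fun i => (i : ℤ))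

instance : CharZero FF := charZero_of_injective_algebraMap (algebraMap ℚ FF).injective

def bF (k : ℕ) : FF := tF ^ k - 1
def gMs (m : Multiset ℕ) : FF := ((m.map bF).prod) / (zMs m : FF)

lemma zMs_cons (k : ℕ) (m : Multiset ℕ) :
    zMs (k ::ₘ m) = k * (m.count k + 1) * zMs m := by
  classical
  by_cases hk : k ∈ m.toFinset
  · have h1 : zMs (k ::ₘ m) = (k ^ (m.count k + 1) * (m.count k + 1).factorial) *
        ∏ i ∈ m.toFinset.erase k, i ^ m.count i * (m.count i).factorial := by
      unfold zMs
      rw [Multiset.toFinset_cons, Finset.insert_eq_self.2 hk, ← Finset.mul_prod_erase _ _ hk,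
        Multiset.count_cons_self]
      congr 1
      exact Finset.prod_congr rfl fun i hi => by
        rw [Multiset.count_cons_of_ne (Finset.ne_of_mem_erase hi)]
    have h2 : zMs m = (k ^ m.count k * (m.count k).factorial) *
        ∏ i ∈ m.toFinset.erase k, i ^ m.count i * (m.count i).factorial :=
      (Finset.mul_prod_erase _ _ hk).symm
    rw [h1, h2, Nat.factorial_succ, pow_succ]
    ring
  · have hkm : k ∉ m := by simpa using hk
    have hc0 : m.count k = 0 := Multiset.count_eq_zero.2 hkm
    unfold zMs
    rw [Multiset.toFinset_cons, Finset.prod_insert hk, Multiset.count_cons_self, hc0]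
    have : (∏ i ∈ m.toFinset, i ^ (k ::ₘ m).count i * ((k ::ₘ m).count i).factorial)
        = ∏ i ∈ m.toFinset, i ^ m.count i * (m.count i).factorial :=
      Finset.prod_congr rfl fun i hi => by
        rw [Multiset.count_cons_of_ne (by rintro rfl; exact hk hi)]
    rw [this]
    simp [Nat.factorial]

lemma gMs_cons {k : ℕ} (hk : 0 < k) (m : Multiset ℕ) :
    ((k : FF) * ((m.count k + 1 : ℕ) : FF)) * gMs (k ::ₘ m) = bF k * gMs m := by
  have hx0 : ((k : FF) * ((m.count k + 1 : ℕ) : FF)) ≠ 0 :=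
    mul_ne_zero (Nat.cast_ne_zero.2 hk.ne') (Nat.cast_ne_zero.2 (Nat.succ_ne_zero _))
  unfold gMs
  rw [Multiset.map_cons, Multiset.prod_cons, zMs_cons]
  push_cast
  rw [← mul_div_assoc, ← mul_div_assoc]
  rw [show ((k:FF) * ((m.count k : FF) + 1)) * (bF k * (m.map bF).prod)
      = bF k * ((k:FF) * ((m.count k : FF) + 1) * (m.map bF).prod) by ring]
  rw [show (k:FF) * ((m.count k : FF) + 1) * (zMs m : FF)
      = (k:FF) * ((m.count k : FF) + 1) * (zMs m : FF) from rfl]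
  rw [mul_div_assoc, mul_div_mul_left _ _ (by push_cast at hx0 ⊢; exact hx0), mul_div_assoc]


def Pset (n : ℕ) : Finset (Multiset ℕ) := Finset.univ.image fun P : Nat.Partition n => P.parts
def SS (n : ℕ) : FF := ∑ m ∈ Pset n, gMs m

lemma mem_Pset {n : ℕ} {m : Multiset ℕ} :
    m ∈ Pset n ↔ m.sum = n ∧ ∀ i ∈ m, 0 < i := by
  constructor
  · rintro hm
    simp only [Pset, Finset.mem_image] at hm
    obtain ⟨P, -, rfl⟩ := hm
    exact ⟨P.parts_sum, fun i hi => P.parts_pos hi⟩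
  · rintro ⟨h1, h2⟩
    simp only [Pset, Finset.mem_image]
    exact ⟨⟨m, fun {i} hi => h2 i hi, h1⟩, Finset.mem_univ _, rfl⟩

lemma Pset_zero : Pset 0 = {0} := by
  ext m
  simp only [mem_Pset, Finset.mem_singleton]
  constructor
  · rintro ⟨h1, h2⟩
    rw [Multiset.eq_zero_iff_forall_notMem]
    intro a ha
    exact absurd (Multiset.sum_eq_zero_iff.mp h1 a ha) (h2 a ha).ne'
  · rintro rfl; simp

lemma SS_zero : SS 0 = 1 := by
  simp [SS, Pset_zero, gMs, zMs]

lemma msum (m : Multiset ℕ) : m.sum = ∑ k ∈ m.toFinset, m.count k * k := by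
  conv_lhs => rw [show m.sum = (m.map id).sum by simp]
  rw [Finset.sum_multiset_map_count]
  simp

lemma recur (n : ℕ) : (n : FF) * SS n = ∑ k ∈ Finset.Icc 1 n, bF k * SS (n - k) := by
  classical
  have lhs : (n : FF) * SS n
      = ∑ p ∈ (Pset n).sigma (fun m => m.toFinset),
          ((p.1.count p.2 * p.2 : ℕ) : FF) * gMs p.1 := by
    rw [Finset.sum_sigma, SS, Finset.mul_sum]
    refine Finset.sum_congr rfl fun m hm => ?_
    dsimp only
    obtain ⟨hsum, -⟩ := mem_Pset.mp hm
    rw [← Finset.sum_mul, ← hsum]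
    congr 1
    rw [msum]
    push_cast
    rfl
  have rhs : ∑ k ∈ Finset.Icc 1 n, bF k * SS (n - k)
      = ∑ p ∈ (Finset.Icc 1 n).sigma (fun k => Pset (n - k)), bF p.1 * gMs p.2 := by
    rw [Finset.sum_sigma]
    exact Finset.sum_congr rfl fun k _ => by rw [SS, Finset.mul_sum]
  rw [lhs, rhs]
  refine Finset.sum_bij' (fun p _ => (⟨p.2, p.1.erase p.2⟩ : Σ _ : ℕ, Multiset ℕ))
    (fun p _ => (⟨p.1 ::ₘ p.2, p.1⟩ : Σ _ : Multiset ℕ, ℕ)) ?_ ?_ ?_ ?_ ?_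
  · rintro ⟨m, k⟩ hp
    dsimp only
    rw [Finset.mem_sigma] at hp ⊢
    dsimp only at hp ⊢
    obtain ⟨hm, hk⟩ := hp
    obtain ⟨hsum, hpos⟩ := mem_Pset.mp hm
    have hkm : k ∈ m := Multiset.mem_toFinset.mp hk
    have hk1 : 1 ≤ k := hpos k hkm
    have hkn : k ≤ n := hsum ▸ Multiset.le_sum_of_mem hkm
    refine ⟨Finset.mem_Icc.mpr ⟨hk1, hkn⟩, mem_Pset.mpr ⟨?_, ?_⟩⟩
    · have : k + (m.erase k).sum = m.sum := by
        rw [← Multiset.sum_cons, Multiset.cons_erase hkm]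
      omega
    · exact fun i hi => hpos i (Multiset.mem_of_mem_erase hi)
  · rintro ⟨k, q⟩ hp
    dsimp only
    rw [Finset.mem_sigma] at hp ⊢
    dsimp only at hp ⊢
    obtain ⟨hk, hq⟩ := hp
    rw [Finset.mem_Icc] at hk
    obtain ⟨hsum, hpos⟩ := mem_Pset.mp hq
    refine ⟨mem_Pset.mpr ⟨?_, ?_⟩, ?_⟩
    · rw [Multiset.sum_cons, hsum]; omega
    · intro i hi
      rcases Multiset.mem_cons.mp hi with rfl | hi
      · omega
      · exact hpos i hi
    · simp
  · rintro ⟨m, k⟩ hp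
    dsimp only
    rw [Finset.mem_sigma] at hp
    have hkm : k ∈ m := Multiset.mem_toFinset.mp hp.2
    simp only [Multiset.cons_erase hkm]
  · rintro ⟨k, q⟩ hp
    dsimp only
    simp
  · rintro ⟨m, k⟩ hp
    dsimp only
    rw [Finset.mem_sigma] at hp
    obtain ⟨hm, hk⟩ := hp
    obtain ⟨-, hpos⟩ := mem_Pset.mp hm
    have hkm : k ∈ m := Multiset.mem_toFinset.mp hk
    have hk1 : 0 < k := hpos k hkm
    have hcount : m.count k = (m.erase k).count k + 1 := by
      rw [← Multiset.count_cons_self k (m.erase k), Multiset.cons_erase hkm]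
    have := gMs_cons hk1 (m.erase k)
    rw [Multiset.cons_erase hkm] at this
    rw [← this, ← hcount]
    push_cast
    ring

lemma key (m : ℕ) :
    ∑ k ∈ Finset.Icc 1 m, (tF ^ k - 1) * (tF ^ (m + 1 - k) - tF ^ (m - k)) + (tF ^ (m + 1) - 1)
      = ((m : FF) + 1) * (tF ^ (m + 1) - tF ^ m) := by
  induction m with
  | zero => simp
  | succ m ih =>
    rw [Finset.sum_Icc_succ_top (by omega)]
    have hstep : ∀ k ∈ Finset.Icc 1 m,
        (tF ^ k - 1) * (tF ^ (m + 1 + 1 - k) - tF ^ (m + 1 - k))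
          = tF * ((tF ^ k - 1) * (tF ^ (m + 1 - k) - tF ^ (m - k))) := by
      intro k hk
      rw [Finset.mem_Icc] at hk
      have h1 : m + 1 + 1 - k = (m + 1 - k) + 1 := by omega
      have h2 : m + 1 - k = (m - k) + 1 := by omega
      rw [h1, pow_succ]
      nth_rewrite 2 [h2]
      rw [pow_succ]
      ring
    rw [Finset.sum_congr rfl hstep, ← Finset.mul_sum]
    have hA : ∑ k ∈ Finset.Icc 1 m, (tF ^ k - 1) * (tF ^ (m + 1 - k) - tF ^ (m - k))
        = ((m : FF) + 1) * (tF ^ (m + 1) - tF ^ m) - (tF ^ (m + 1) - 1) := by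
      rw [← ih]; ring
    rw [hA]
    have e1 : tF ^ (m + 1 + 1) = tF ^ (m + 1) * tF := pow_succ _ _
    have e2 : tF ^ (m + 1) = tF ^ m * tF := pow_succ _ _
    push_cast
    rw [show m + 1 - m = 1 by omega, Nat.sub_self]
    rw [e1, e2]
    ring

lemma SS_eq (n : ℕ) (hn : 1 ≤ n) : SS n = tF ^ n - tF ^ (n - 1) := by
  induction n using Nat.strong_induction_on with
  | _ n IH =>
    obtain ⟨m, rfl⟩ : ∃ m, n = m + 1 := ⟨n - 1, by omega⟩
    have h := recur (m + 1)
    rw [Finset.sum_Icc_succ_top (by omega)] at h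
    have hterm : ∀ k ∈ Finset.Icc 1 m,
        bF k * SS (m + 1 - k) = (tF ^ k - 1) * (tF ^ (m + 1 - k) - tF ^ (m - k)) := by
      intro k hk
      rw [Finset.mem_Icc] at hk
      rw [IH (m + 1 - k) (by omega) (by omega), bF,
        show m + 1 - k - 1 = m - k from by omega]
    rw [Finset.sum_congr rfl hterm, Nat.sub_self, SS_zero, bF, mul_one, key] at h
    have hne : ((m : FF) + 1) ≠ 0 := by
      have : (((m + 1 : ℕ)) : FF) ≠ 0 := Nat.cast_ne_zero.2 (Nat.succ_ne_zero m)
      push_cast at this; exact this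
    have h' : ((m : FF) + 1) * SS (m + 1) = ((m : FF) + 1) * (tF ^ (m + 1) - tF ^ m) := by
      push_cast at h; linear_combination h
    have := mul_left_cancel₀ hne h'
    simpa using this

lemma neg_prod (m : Multiset ℕ) :
    (m.map bF).prod = (-1 : FF) ^ (Multiset.card m) * (m.map fun j => 1 - tF ^ j).prod := by
  induction m using Multiset.induction with
  | empty => simp
  | cons a s ih =>
    rw [Multiset.map_cons, Multiset.map_cons, Multiset.prod_cons, Multiset.prod_cons, ih,
      Multiset.card_cons, pow_succ, bF]
    ring

/-- For every `n ≥ 1`,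
`∑_{λ ⊢ n} (-1)^{l(λ)} (∏_j (1 - t^{λ_j}))/z_λ = t^n - t^{n-1}`. -/
theorem statement1 (n : ℕ) (hn : 1 ≤ n) :
    ∑ P : Nat.Partition n,
      ((-1 : FF) ^ (Multiset.card P.parts)) *
        ((P.parts.map fun j => 1 - tF ^ j).prod) / (zMs P.parts : FF)
      = tF ^ n - tF ^ (n - 1) := by

  have hsum : SS n = ∑ P : Nat.Partition n, gMs P.parts := by
    rw [SS, Pset, Finset.sum_image]
    intro P _ Q _ h
    exact Nat.Partition.ext h
  rw [← SS_eq n hn, hsum]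
  refine Finset.sum_congr rfl fun P _ => ?_
  rw [gMs, neg_prod, mul_div_assoc]

end
end Green
end

section
/- Let m ≥ n ≥ 1 and let μ be a partition of m+n. Then X^{(m,n)}_μ(t) = (t−1)·[t^{−m−1} D_t(μ)]_+ + D^{(n)}(μ), where D_t(μ) = ∑_{τ ◁ μ} t^{|τ|} (sum over all subpartitions of μ), D^{(n)}(μ) is the number of subpartitions of μ of weight n, and [f]_+ denotes the sum of the terms with nonnegative exponents of a Laurent polynomial f in t. -/
/-!
Only one raising operator acts on `(m, n)`, so `Q_{(m,n)} = ∑_{j=0}^{n} c_j q_{m+j} q_{n-j}`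
with `c_0 = 1`, `c_j = t^j - t^{j-1}`. The coefficient of `p_μ` in `q_a q_b` is
`∑ z_ν(t)⁻¹ z_ρ(t)⁻¹` over `ν ⊢ a`, `ρ ⊢ b` with `ν ∪ ρ = μ`. Multiplied by `z_μ(t)`, the
factors `1 - t^i` cancel and `z_μ / (z_ν z_ρ) = ∏_i C(m_i(μ), m_i(ν))` is the number of index
subsets of `μ` carrying `ν`; so that coefficient is `D^{(a)}(μ) / z_μ(t)` and
`X^{(m,n)}_μ = ∑_j c_j D^{(m+j)}(μ)`. Telescoping the `c_j` gives the `(t-1)[…]_+` term, and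
complementation `τ ↦ μ ∖ τ` turns the remaining `D^{(m)}(μ)` into `D^{(n)}(μ)`.
-/

open scoped BigOperators

namespace Green

noncomputable section

section Counting

variable {α : Type*} [DecidableEq α]

lemma count_powerset_cons (a : α) (s ν : Multiset α) :
    (a ::ₘ s).powerset.count ν =
      s.powerset.count ν + if a ∈ ν then s.powerset.count (ν.erase a) else 0 := by
  rw [Multiset.powerset_cons, Multiset.count_add]
  congr 1
  split_ifs with ha
  · conv_lhs => rw [← Multiset.cons_erase ha]
    exact Multiset.count_map_eq_count' _ _ (fun _ _ h => (Multiset.cons_inj_right a).mp h) _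
  · refine Multiset.count_eq_zero.mpr fun h => ?_
    obtain ⟨u, -, rfl⟩ := Multiset.mem_map.mp h
    exact ha (Multiset.mem_cons_self a u)

lemma count_powerset_eq_prod_choose {S : Finset α} (s ν : Multiset α)
    (hs : s.toFinset ⊆ S) (hν : ν.toFinset ⊆ S) :
    s.powerset.count ν = ∏ i ∈ S, (s.count i).choose (ν.count i) := by
  induction s using Multiset.induction_on generalizing ν with
  | empty =>
    rw [Multiset.powerset_zero, Multiset.count_singleton]
    split_ifs with h
    · simp [h]
    · obtain ⟨a, ha⟩ := Multiset.exists_mem_of_ne_zero h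
      refine (Finset.prod_eq_zero (hν (Multiset.mem_toFinset.mpr ha)) ?_).symm
      exact Nat.choose_eq_zero_of_lt (by simpa using Multiset.count_pos.mpr ha)
  | cons a s ih =>
    have haS : a ∈ S := hs (by simp)
    have hsS : s.toFinset ⊆ S := fun i hi => hs (by simp_all)
    have hrest : ∀ ρ : Multiset α, (∀ i ≠ a, ρ.count i = ν.count i) →
        ∏ i ∈ S.erase a, (s.count i).choose (ρ.count i) =
          ∏ i ∈ S.erase a, ((a ::ₘ s).count i).choose (ν.count i) :=
      fun ρ hρ => Finset.prod_congr rfl fun i hi => by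
        rw [Multiset.count_cons_of_ne (Finset.ne_of_mem_erase hi), hρ i (Finset.ne_of_mem_erase hi)]
    rw [count_powerset_cons, ih ν hsS hν, ← Finset.mul_prod_erase _ _ haS,
      ← Finset.mul_prod_erase _ _ haS, hrest ν fun _ _ => rfl, Multiset.count_cons_self]
    split_ifs with ha
    · rw [ih _ hsS ((Multiset.toFinset_subset.mpr (Multiset.erase_subset a ν)).trans hν),
        ← Finset.mul_prod_erase _ _ haS,
        hrest _ fun i hi => Multiset.count_erase_of_ne hi ν, ← add_mul,
        Multiset.count_erase_self, Nat.choose_succ_left _ _ (Multiset.count_pos.mpr ha)]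
      ring
    · rw [Multiset.count_eq_zero_of_notMem ha]
      simp

lemma zMs_eq_prod {S : Finset ℕ} {s : Multiset ℕ} (hs : s.toFinset ⊆ S) :
    zMs s = ∏ i ∈ S, i ^ s.count i * (s.count i).factorial :=
  Finset.prod_subset hs fun i _ hi => by
    rw [Multiset.count_eq_zero_of_notMem (by simpa using hi)]
    simp

lemma count_powerset_mul_zMs {s ν : Multiset ℕ} (hν : ν ≤ s) :
    s.powerset.count ν * (zMs ν * zMs (s - ν)) = zMs s := by
  have hνs : ν.toFinset ⊆ s.toFinset := Multiset.toFinset_subset.mpr (Multiset.subset_of_le hν)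
  have hsub : (s - ν).toFinset ⊆ s.toFinset :=
    Multiset.toFinset_subset.mpr (Multiset.subset_of_le (Multiset.sub_le_self s ν))
  rw [count_powerset_eq_prod_choose s ν subset_rfl hνs, zMs_eq_prod hνs, zMs_eq_prod hsub,
    zMs_eq_prod subset_rfl, ← Finset.prod_mul_distrib, ← Finset.prod_mul_distrib]
  refine Finset.prod_congr rfl fun i _ => ?_
  have hle : ν.count i ≤ s.count i := Multiset.count_le_of_le i hν
  rw [Multiset.count_sub, ← Nat.choose_mul_factorial_mul_factorial hle,
    ← pow_mul_pow_sub i hle]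
  ring

end Counting

lemma card_filter_sum_powerset_eq_of_add_eq {s : Multiset ℕ} {a b : ℕ} (h : a + b = s.sum) :
    Multiset.card (s.powerset.filter (·.sum = a)) =
      Multiset.card (s.powerset.filter (·.sum = b)) := by
  rw [← Multiset.antidiagonal_map_fst, Multiset.filter_map, Multiset.filter_map,
    Multiset.card_map, Multiset.card_map]
  nth_rw 2 [← Multiset.map_swap_antidiagonal]
  rw [Multiset.filter_map, Multiset.card_map]
  congr 1
  refine Multiset.filter_congr fun x hx => ?_
  have := congrArg Multiset.sum (Multiset.mem_antidiagonal.mp hx)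
  rw [Multiset.sum_add] at this
  simp only [Function.comp_apply, Prod.fst_swap]
  omega

lemma card_filter_sum_powerset_coe (l : List ℕ) (a : ℕ) :
    Multiset.card ((l : Multiset ℕ).powerset.filter (·.sum = a)) =
      (l.sublists.filter (·.sum = a)).length := by
  rw [Multiset.powerset_coe, Multiset.filter_coe, Multiset.coe_card, List.filter_map,
    List.length_map]
  rfl

lemma one_sub_tF_pow_ne_zero {i : ℕ} (hi : 0 < i) : (1 : FF) - tF ^ i ≠ 0 := by
  have hX : (Polynomial.X : Polynomial ℚ) ^ i ≠ 1 := fun h => by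
    simpa [hi.ne'] using congrArg Polynomial.natDegree h
  rw [sub_ne_zero, ne_comm, tF, ← RatFunc.algebraMap_X, ← map_pow,
    ← map_one (algebraMap (Polynomial ℚ) FF)]
  exact (RatFunc.algebraMap_injective ℚ).ne hX

lemma zMs_pos {s : Multiset ℕ} (hs : ∀ x ∈ s, 0 < x) : 0 < zMs s :=
  Finset.prod_pos fun i hi => by
    have := hs i (Multiset.mem_toFinset.mp hi)
    positivity

lemma prod_one_sub_tF_pow_ne_zero {s : Multiset ℕ} (hs : ∀ x ∈ s, 0 < x) :
    (s.map fun i => 1 - tF ^ i).prod ≠ 0 :=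
  Multiset.prod_ne_zero fun h0 => by
    obtain ⟨i, hi, h⟩ := Multiset.mem_map.mp h0
    exact one_sub_tF_pow_ne_zero (hs i hi) h

lemma ztMs_ne_zero {s : Multiset ℕ} (hs : ∀ x ∈ s, 0 < x) : ztMs s ≠ 0 :=
  div_ne_zero (Nat.cast_ne_zero.mpr (zMs_pos hs).ne') (prod_one_sub_tF_pow_ne_zero hs)

lemma ztMs_mul_inv_mul_inv {s ν ρ : Multiset ℕ} (hs : ∀ x ∈ s, 0 < x) (h : ν + ρ = s) :
    ztMs s * ((ztMs ν)⁻¹ * (ztMs ρ)⁻¹) = (s.powerset.count ν : FF) := by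
  subst h
  have hν : ∀ x ∈ ν, 0 < x := fun x hx => hs x (Multiset.mem_add.mpr (Or.inl hx))
  have hρ : ∀ x ∈ ρ, 0 < x := fun x hx => hs x (Multiset.mem_add.mpr (Or.inr hx))
  have hz : ((ν + ρ).powerset.count ν : FF) * (zMs ν * zMs ρ) = zMs (ν + ρ) := by
    exact_mod_cast add_tsub_cancel_left ν ρ ▸ count_powerset_mul_zMs (Multiset.le_add_right ν ρ)
  have := prod_one_sub_tF_pow_ne_zero hν
  have := prod_one_sub_tF_pow_ne_zero hρ
  have : (zMs ν : FF) ≠ 0 := Nat.cast_ne_zero.mpr (zMs_pos hν).ne'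
  have : (zMs ρ : FF) ≠ 0 := Nat.cast_ne_zero.mpr (zMs_pos hρ).ne'
  rw [ztMs, ztMs, ztMs, Multiset.map_add, Multiset.prod_add, ← hz]
  field_simp

lemma pMs_add (s t : Multiset ℕ) : pMs (s + t) = pMs s * pMs t := by
  rw [pMs, Multiset.map_add, Multiset.prod_add, pMs, pMs]

def expo (s : Multiset ℕ) : ℕ+ →₀ ℕ := Multiset.toFinsupp (s.map Nat.toPNat')

lemma pMs_eq_monomial {s : Multiset ℕ} (hs : ∀ x ∈ s, 0 < x) :
    pMs s = MvPolynomial.monomial (expo s) 1 := by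
  induction s using Multiset.induction_on with
  | empty => simp [pMs, expo]
  | cons a s ih =>
    have ha0 : 0 < a := hs a (Multiset.mem_cons_self a s)
    have ha : pMs {a} = MvPolynomial.monomial (expo {a}) 1 := by
      have : a.toPNat' = (⟨a, ha0⟩ : ℕ+) := PNat.coe_inj.mp (PNat.toPNat'_coe ha0)
      simp only [pMs, pS, ha0, expo, MvPolynomial.X, this, Multiset.map_singleton,
        Multiset.prod_singleton, dif_pos]
      exact congrArg (MvPolynomial.monomial · 1) (Multiset.toFinsupp_singleton _).symm
    rw [← Multiset.singleton_add, pMs_add, ih fun x hx => hs x (by simp [hx]), ha,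
      MvPolynomial.monomial_mul, one_mul, expo, expo, expo, Multiset.map_add,
      Multiset.toFinsupp_add]

lemma eq_of_expo_eq {s t : Multiset ℕ} (hs : ∀ x ∈ s, 0 < x) (ht : ∀ x ∈ t, 0 < x)
    (h : expo s = expo t) : s = t := by
  have key := congrArg (Multiset.map ((↑) : ℕ+ → ℕ)) (Multiset.toFinsupp.injective h)
  simp only [Multiset.map_map, Function.comp_def] at key
  rwa [Multiset.map_congr rfl fun x hx => PNat.toPNat'_coe (hs x hx),
    Multiset.map_congr rfl fun x hx => PNat.toPNat'_coe (ht x hx), Multiset.map_id',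
    Multiset.map_id'] at key

lemma coeff_expo_pMs {s ν : Multiset ℕ} (hs : ∀ x ∈ s, 0 < x) (hν : ∀ x ∈ ν, 0 < x) :
    MvPolynomial.coeff (expo s) (pMs ν) = if ν = s then 1 else 0 := by
  rw [pMs_eq_monomial hν, MvPolynomial.coeff_monomial]
  exact if_congr ⟨eq_of_expo_eq hν hs, congrArg expo⟩ rfl rfl

lemma qq_natCast (a : ℕ) : qq a = ∑ P : Nat.Partition a, (ztMs P.parts)⁻¹ • pMs P.parts := by
  rw [qq, if_neg (by omega), Int.toNat_natCast]

lemma sum_partition_count_powerset {s : Multiset ℕ} (hs : ∀ x ∈ s, 0 < x) (a : ℕ) :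
    ∑ P : Nat.Partition a, s.powerset.count P.parts =
      Multiset.card (s.powerset.filter (·.sum = a)) := by
  rw [← Multiset.sum_count_eq_card (s := Finset.univ.image Nat.Partition.parts),
    Finset.sum_image fun P _ Q _ h => Nat.Partition.ext h]
  · refine Finset.sum_congr rfl fun P _ => ?_
    exact (Multiset.count_filter_of_pos (p := fun ν : Multiset ℕ => ν.sum = a) P.parts_sum).symm
  · intro ν hν
    obtain ⟨hle, hsum⟩ := Multiset.mem_filter.mp hν
    exact Finset.mem_image.mpr ⟨⟨ν, fun hx => hs _ (Multiset.mem_of_le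
      (Multiset.mem_powerset.mp hle) hx), hsum⟩, Finset.mem_univ _, rfl⟩

/-- Given `ν ⊢ a` inside `s ⊢ a + b`, the only `ρ ⊢ b` completing it to `s` is `s - ν`. -/
lemma sum_partition_ite_add_eq {M : Type*} [AddCommMonoid M] {s ν : Multiset ℕ}
    (hs : ∀ x ∈ s, 0 < x) {a b : ℕ} (hν : ν.sum = a) (h : a + b = s.sum) (g : Multiset ℕ → M) :
    ∑ R : Nat.Partition b, (if ν + R.parts = s then g R.parts else 0) =
      if ν ≤ s then g (s - ν) else 0 := by
  split_ifs with hle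
  · have hsum : (s - ν).sum = b := by
      have := congrArg Multiset.sum (add_tsub_cancel_of_le hle)
      rw [Multiset.sum_add] at this
      omega
    let R₀ : Nat.Partition b :=
      ⟨s - ν, fun hx => hs _ (Multiset.mem_of_le (Multiset.sub_le_self s ν) hx), hsum⟩
    have hR : ∀ R : Nat.Partition b, ν + R.parts = s ↔ R = R₀ := fun R => by
      rw [Nat.Partition.ext_iff, eq_tsub_iff_add_eq_of_le hle, add_comm]
    simp_rw [hR]
    rw [Fintype.sum_ite_eq']
  · refine Finset.sum_eq_zero fun R _ => if_neg fun hR => hle ?_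
    rw [← hR]
    exact Multiset.le_add_right ν R.parts

lemma ztMs_mul_coeff_qq_mul_qq {s : Multiset ℕ} (hs : ∀ x ∈ s, 0 < x) {a b : ℕ}
    (h : a + b = s.sum) :
    ztMs s * MvPolynomial.coeff (expo s) (qq a * qq b) =
      Multiset.card (s.powerset.filter (·.sum = a)) := by
  have hcoeff : MvPolynomial.coeff (expo s) (qq a * qq b) =
      ∑ P : Nat.Partition a, ∑ R : Nat.Partition b,
        if P.parts + R.parts = s then (ztMs P.parts)⁻¹ * (ztMs R.parts)⁻¹ else 0 := by
    simp only [qq_natCast, Finset.sum_mul_sum, MvPolynomial.coeff_sum, smul_mul_smul_comm,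
      ← pMs_add, MvPolynomial.coeff_smul, smul_eq_mul]
    refine Finset.sum_congr rfl fun P _ => Finset.sum_congr rfl fun R _ => ?_
    rw [coeff_expo_pMs hs fun x hx => ?_]
    · simp
    · rcases Multiset.mem_add.mp hx with hx | hx
      exacts [P.parts_pos hx, R.parts_pos hx]
  rw [hcoeff, ← sum_partition_count_powerset hs, Nat.cast_sum, Finset.mul_sum]
  refine Finset.sum_congr rfl fun P _ => ?_
  rw [sum_partition_ite_add_eq hs P.parts_sum h fun ρ => (ztMs P.parts)⁻¹ * (ztMs ρ)⁻¹]
  split_ifs with hle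
  · exact ztMs_mul_inv_mul_inv hs (add_tsub_cancel_of_le hle)
  · rw [mul_zero, Multiset.count_eq_zero_of_notMem (mt Multiset.mem_powerset.mp hle),
      Nat.cast_zero]

lemma sum_range_ite_cRO {m n k : ℕ} (hk : k ≤ m + n) :
    ∑ j ∈ Finset.range (n + 1), (if k = m + j then cRO j else 0) =
      (tF - 1) * (if m + 1 ≤ k then tF ^ (k - (m + 1)) else 0) + if k = m then 1 else 0 := by
  rcases lt_or_ge k m with hlt | hle
  · rw [Finset.sum_eq_zero fun j _ => if_neg (by omega), if_neg (by omega), if_neg (by omega)]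
    ring
  obtain ⟨i, rfl⟩ := Nat.exists_eq_add_of_le hle
  simp_rw [Nat.add_left_cancel_iff]
  rw [Finset.sum_ite_eq, if_pos (Finset.mem_range.mpr (by omega))]
  rcases i with _ | i
  · simp [cRO]
  · rw [if_pos (by omega), if_neg (by omega), show m + (i + 1) - (m + 1) = i by omega, cRO]
    ring

lemma sum_range_cRO_mul_length_filter {m n : ℕ} (L : List (List ℕ))
    (hL : ∀ τ ∈ L, τ.sum ≤ m + n) :
    ∑ j ∈ Finset.range (n + 1), cRO j * ((L.filter (·.sum = m + j)).length : FF) =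
      (tF - 1) * (L.map fun τ => if m + 1 ≤ τ.sum then tF ^ (τ.sum - (m + 1)) else 0).sum +
        ((L.filter (·.sum = m)).length : FF) := by
  induction L with
  | nil => simp
  | cons τ L ih =>
    have hcons : ∀ k, (((τ :: L).filter (·.sum = k)).length : FF) =
        (if τ.sum = k then 1 else 0) + (L.filter (·.sum = k)).length := fun k => by
      by_cases h : τ.sum = k <;> simp [h, add_comm]
    simp only [hcons, mul_add, Finset.sum_add_distrib, mul_boole,
      List.map_cons, List.sum_cons]
    rw [ih fun σ hσ => hL σ (List.mem_cons_of_mem τ hσ),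
      sum_range_ite_cRO (hL τ List.mem_cons_self)]
    ring

lemma sortDesc_pair {m n : ℕ} (hmn : n ≤ m) : sortDesc ↑[m, n] = [m, n] := by
  simp [sortDesc, List.mergeSort, List.merge]
  omega

instance : Unique (PairsLT 2) where
  default := ⟨(0, 1), by decide⟩
  uniq := by decide

lemma QTup_two (α : Fin 2 → ℤ) :
    QTup α = ∑ᶠ j : ℕ, cRO j • (qq (α 0 + j) * qq (α 1 - j)) := by
  rw [QTup, ← finsum_comp_equiv (Equiv.funUnique (PairsLT 2) ℕ).symm]
  refine finsum_congr fun j => ?_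
  rw [Fintype.prod_unique, qTup, Fin.prod_univ_two]
  have hd : ((default : PairsLT 2) : Fin 2 × Fin 2) = (0, 1) := rfl
  simp [raised, Equiv.funUnique, hd, sub_eq_add_neg]

lemma QMs_pair {m n : ℕ} (hmn : n ≤ m) :
    QMs ↑[m, n] = ∑ j ∈ Finset.range (n + 1), cRO j • (qq ↑(m + j) * qq ↑(n - j)) := by
  rw [QMs, sortDesc_pair hmn, QL, QTup_two]
  rw [finsum_eq_sum_of_support_subset _ (s := Finset.range (n + 1)) fun j hj => ?_]
  · refine Finset.sum_congr rfl fun j hj => ?_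
    rw [Finset.mem_range] at hj
    simp [Nat.cast_sub (by omega : j ≤ n)]
  · by_contra hjn
    rw [Finset.coe_range, Set.mem_Iio, not_lt] at hjn
    simp [qq] at hj
    omega

lemma coeff_expo_sum_partition {N : ℕ} (f : Nat.Partition N → FF) (P₀ : Nat.Partition N) :
    MvPolynomial.coeff (expo P₀.parts) (∑ P : Nat.Partition N, f P • pMs P.parts) = f P₀ := by
  simp only [MvPolynomial.coeff_sum, MvPolynomial.coeff_smul,
    coeff_expo_pMs (fun _ => P₀.parts_pos) (fun _ => Nat.Partition.parts_pos _),
    ← Nat.Partition.ext_iff, smul_eq_mul, mul_ite, mul_one, mul_zero, Fintype.sum_ite_eq']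

lemma X_pair_eq_sum_range_cRO {m n : ℕ} (hmn : n ≤ m) {μ : List ℕ} (hpos : ∀ x ∈ μ, 0 < x)
    (hsum : μ.sum = m + n) (X : Multiset ℕ → Multiset ℕ → FF)
    (hX : QMs ↑[m, n] = ∑ P : Nat.Partition (Multiset.sum ↑[m, n]),
      ((ztMs P.parts)⁻¹ * X ↑[m, n] P.parts) • pMs P.parts) :
    X ↑[m, n] ↑μ = ∑ j ∈ Finset.range (n + 1),
      cRO j * ((μ.sublists.filter (·.sum = m + j)).length : FF) := by
  have hposM : ∀ x ∈ (μ : Multiset ℕ), 0 < x := fun x hx => hpos x (Multiset.mem_coe.mp hx)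
  let P₀ : Nat.Partition (Multiset.sum ↑[m, n]) := ⟨μ, hposM _, by simp [hsum]⟩
  have hcoeff := congrArg (ztMs μ * MvPolynomial.coeff (expo P₀.parts) ·) hX
  rw [coeff_expo_sum_partition, mul_inv_cancel_left₀ (ztMs_ne_zero hposM)] at hcoeff
  rw [← hcoeff, QMs_pair hmn, MvPolynomial.coeff_sum, Finset.mul_sum]
  refine Finset.sum_congr rfl fun j hj => ?_
  rw [MvPolynomial.coeff_smul, smul_eq_mul, mul_left_comm,
    ztMs_mul_coeff_qq_mul_qq hposM (by simp at hj; simp [hsum]; omega),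
    card_filter_sum_powerset_coe]

theorem statement8_general (m n : ℕ) (hmn : n ≤ m) (μ : List ℕ)
    (hpos : ∀ x ∈ μ, 0 < x) (hsum : μ.sum = m + n)
    (X : Multiset ℕ → Multiset ℕ → FF)
    (hX : ∀ ν : Multiset ℕ, QMs ν =
      ∑ P : Nat.Partition (Multiset.sum ν), ((ztMs P.parts)⁻¹ * X ν P.parts) • pMs P.parts) :
    X (↑([m, n] : List ℕ)) (↑μ) =
      (tF - 1) * ((μ.sublists.map fun τ =>
          if m + 1 ≤ τ.sum then tF ^ (τ.sum - (m + 1)) else 0).sum)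
        + ((μ.sublists.filter fun τ => τ.sum = n).length : FF) := by
  have hL : ∀ τ ∈ μ.sublists, τ.sum ≤ m + n := fun τ hτ =>
    hsum ▸ (List.mem_sublists.mp hτ).sum_le_sum fun _ _ => Nat.zero_le _
  have hsymm := card_filter_sum_powerset_eq_of_add_eq (s := μ) (a := m) (b := n) (by simp [hsum])
  rw [card_filter_sum_powerset_coe, card_filter_sum_powerset_coe] at hsymm
  rw [X_pair_eq_sum_range_cRO hmn hpos hsum X (hX _), sum_range_cRO_mul_length_filter _ hL, hsymm]

/-- For `m ≥ n ≥ 1` and a partition `μ ⊢ m+n`,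
`X^{(m,n)}_μ(t) = (t-1)·[t^{-m-1} D_t(μ)]_+ + D^{(n)}(μ)` where
`D_t(μ) = ∑_{τ ◁ μ} t^{|τ|}`, `[·]_+` keeps the terms with nonnegative exponents
(so `[t^{-m-1}D_t(μ)]_+ = ∑_{τ ◁ μ, |τ| ≥ m+1} t^{|τ|-m-1}`), and `D^{(n)}(μ)` is the
number of subpartitions of `μ` of weight `n`. -/
theorem statement8 (m n : ℕ) (hmn : n ≤ m) (hn : 1 ≤ n) (μ : List ℕ)
    (hsort : μ.Pairwise (· ≥ ·)) (hpos : ∀ x ∈ μ, 0 < x) (hsum : μ.sum = m + n)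
    (X : Multiset ℕ → Multiset ℕ → FF)
    (hX : ∀ ν : Multiset ℕ, QMs ν =
      ∑ P : Nat.Partition (Multiset.sum ν), ((ztMs P.parts)⁻¹ * X ν P.parts) • pMs P.parts) :
    X (↑([m, n] : List ℕ)) (↑μ) =
      (tF - 1) * ((μ.sublists.map fun τ =>
          if m + 1 ≤ τ.sum then tF ^ (τ.sum - (m + 1)) else 0).sum)
        + ((μ.sublists.filter fun τ => τ.sum = n).length : FF) :=
  statement8_general m n hmn μ hpos hsum X hX

end
end Green
end
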